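/- Let T1 and T2 be finite trees, each with at least one edge, and let T1' be the tree obtained from T1 by adding one new vertex adjacent to exactly one vertex of T1. Then capt_2(T1 □ T2) ≤ capt_2(T1' □ T2); that is, adding a leaf to one factor does not decrease the 2-capture time of the Cartesian product. -/

import Mathlib

/-!
Cops and Robber game on a simple graph `G` with `k` cops.
Convention (as in the paper): the cops first choose starting positions, then the
robber chooses a starting position; in every subsequent round the robber moves
first (staying or moving to an adjacent vertex) and then each cop moves
(staying or moving to an adjacent vertex).  The cops win as soon as some cop
occupies the robber's vertex.  Strategies have full information: a move may
depend on the round number and on all current positions.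
-/

open SimpleGraph

universe u v w

/-- A full-information movement strategy for `k` cops on `G`: given the round
number, the current cop positions and the robber's current position, each cop
stays or moves along an edge. -/
structure CopMoves {V : Type u} (G : SimpleGraph V) (k : ℕ) where
  move : ℕ → (Fin k → V) → V → (Fin k → V)
  valid : ∀ n c r i, move n c r i = c i ∨ G.Adj (c i) (move n c r i)

/-- A full-information movement strategy for the robber on `G` against `k` cops. -/
structure RobberMoves {V : Type u} (G : SimpleGraph V) (k : ℕ) where
  move : ℕ → (Fin k → V) → V → V
  valid : ∀ n c r, move n c r = r ∨ G.Adj r (move n c r)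

/-- The positions (cops, robber) after `n` rounds, starting from the
configuration `(c0, r0)`; in each round the robber moves first, then the cops. -/
def playFrom {V : Type u} {G : SimpleGraph V} {k : ℕ} (CM : CopMoves G k)
    (RM : RobberMoves G k) (c0 : Fin k → V) (r0 : V) : ℕ → (Fin k → V) × V
  | 0 => (c0, r0)
  | n + 1 =>
      let p := playFrom CM RM c0 r0 n
      let r' := RM.move n p.1 p.2
      (CM.move n p.1 r', r')

/-- The robber is captured within `t` rounds of the play from `(c0, r0)`. -/
def CapturedIn {V : Type u} {G : SimpleGraph V} {k : ℕ} (CM : CopMoves G k)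
    (RM : RobberMoves G k) (c0 : Fin k → V) (r0 : V) (t : ℕ) : Prop :=
  ∃ n ≤ t, ∃ i, (playFrom CM RM c0 r0 n).1 i = (playFrom CM RM c0 r0 n).2

/-- From the configuration `(c0, r0)`, robber to move, the `k` cops can
guarantee capture within `t` rounds. -/
def CopsWinFrom {V : Type u} (G : SimpleGraph V) (k : ℕ) (c0 : Fin k → V) (r0 : V)
    (t : ℕ) : Prop :=
  ∃ CM : CopMoves G k, ∀ RM : RobberMoves G k, CapturedIn CM RM c0 r0 t

/-- In the whole game (cops choose starting vertices, then the robber chooses a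
starting vertex), `k` cops can guarantee capture within `t` rounds. -/
def CopsWinIn {V : Type u} (G : SimpleGraph V) (k t : ℕ) : Prop :=
  ∃ c0 : Fin k → V, ∃ CM : CopMoves G k, ∀ r0 : V, ∀ RM : RobberMoves G k,
    CapturedIn CM RM c0 r0 t

/-- `G` is `k`-cop-win. -/
def IsCopWin {V : Type u} (G : SimpleGraph V) (k : ℕ) : Prop := ∃ t, CopsWinIn G k t

/-- The `k`-capture time of `G`: the least `t` such that `k` cops can guarantee
capture within `t` rounds. -/
noncomputable def captTime {V : Type u} (G : SimpleGraph V) (k : ℕ) : ℕ :=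
  sInf {t | CopsWinIn G k t}

/-- The graph obtained from `T` by adding one new vertex (`none`) adjacent to
exactly the vertex `x` of `T`. -/
def addLeaf {V : Type u} (T : SimpleGraph V) (x : V) : SimpleGraph (Option V) where
  Adj a b := match a, b with
    | some a, some b => T.Adj a b
    | some a, none => a = x
    | none, some b => b = x
    | none, none => False
  symm := by
    constructor
    rintro (_ | a) (_ | b) h <;> simp_all [SimpleGraph.adj_comm]
  loopless := by
    constructor
    rintro (_ | a) h <;> simp_all

/-!
Folding the new leaf onto `x` retracts `T1' □ T2` onto `T1 □ T2`, and the shadow of a winning cop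
strategy under a retraction wins within the same number of rounds. This needs `T1' □ T2` to be
2-cop-win at all (otherwise its capture time is `sInf ∅ = 0`): on a product of two finite trees,
one cop chases the robber along the first factor first and the other along the second. Ordering
the sizes of the robber's territories in the two factors lexicographically gives each cop a
potential, and their sum drops every round.
-/

section WinningPosition

variable {V : Type*} {G : SimpleGraph V} {k : ℕ}

/-- Backward-induction form of `CopsWinFrom` (robber to move). Unlike strategies, which see only
the current positions, it can be pushed along retractions. -/
def WinningPosition (G : SimpleGraph V) (k : ℕ) : ℕ → (Fin k → V) → V → Prop
  | 0, c, r => ∃ i, c i = r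
  | t + 1, c, r => (∃ i, c i = r) ∨ ∀ r', (r' = r ∨ G.Adj r r') →
      ∃ c', (∀ i, c' i = c i ∨ G.Adj (c i) (c' i)) ∧ WinningPosition G k t c' r'

lemma WinningPosition.of_capture {t : ℕ} {c : Fin k → V} {r : V} (h : ∃ i, c i = r) :
    WinningPosition G k t c r := by
  cases t <;> simp only [WinningPosition, h, true_or]

open scoped Classical in
/-- With `t` rounds left at the start, in round `n` move to any position that is winning with
`t - n - 1` rounds left. -/
noncomputable def winningMoves (G : SimpleGraph V) (k t : ℕ) : CopMoves G k where
  move n c r :=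
    if h : ∃ c', (∀ i, c' i = c i ∨ G.Adj (c i) (c' i)) ∧ WinningPosition G k (t - n - 1) c' r
    then h.choose else c
  valid n c r i := by
    split_ifs with h
    · exact h.choose_spec.1 i
    · exact Or.inl rfl

lemma WinningPosition.winningMoves_move {t n s : ℕ} (hs : t - n = s + 1) {c : Fin k → V}
    {r r' : V} (hwin : WinningPosition G k (s + 1) c r) (hcap : ¬∃ i, c i = r)
    (hr' : r' = r ∨ G.Adj r r') :
    WinningPosition G k s ((winningMoves G k t).move n c r') r' := by
  have hex := (hwin.resolve_left hcap) r' hr'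
  rw [show s = t - n - 1 by omega] at hex ⊢
  simp only [winningMoves, dif_pos hex]
  exact hex.choose_spec.2

lemma winningPosition_playFrom_winningMoves {t : ℕ} {c₀ : Fin k → V} {r₀ : V}
    (h : WinningPosition G k t c₀ r₀) (RM : RobberMoves G k) (n : ℕ) :
    (∃ m ≤ n, ∃ i, (playFrom (winningMoves G k t) RM c₀ r₀ m).1 i =
      (playFrom (winningMoves G k t) RM c₀ r₀ m).2) ∨
    WinningPosition G k (t - n) (playFrom (winningMoves G k t) RM c₀ r₀ n).1
      (playFrom (winningMoves G k t) RM c₀ r₀ n).2 := by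
  induction n with
  | zero => exact Or.inr h
  | succ n ih =>
    set p := playFrom (winningMoves G k t) RM c₀ r₀ n
    rcases ih with ⟨m, hm, hcap⟩ | hwin
    · exact Or.inl ⟨m, by omega, hcap⟩
    by_cases hcap : ∃ i, p.1 i = p.2
    · exact Or.inl ⟨n, by omega, hcap⟩
    right
    obtain ⟨s, hs⟩ : ∃ s, t - n = s + 1 := by
      cases h' : t - n with
      | zero => rw [h'] at hwin; exact absurd hwin hcap
      | succ s => exact ⟨s, rfl⟩
    rw [show t - (n + 1) = s by omega]
    exact (hs ▸ hwin).winningMoves_move hs hcap (RM.valid n p.1 p.2)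

lemma capturedIn_winningMoves {t : ℕ} {c₀ : Fin k → V} {r₀ : V}
    (h : WinningPosition G k t c₀ r₀) (RM : RobberMoves G k) :
    CapturedIn (winningMoves G k t) RM c₀ r₀ t := by
  rcases winningPosition_playFrom_winningMoves h RM t with ⟨m, hm, hcap⟩ | hwin
  · exact ⟨m, hm, hcap⟩
  · rw [Nat.sub_self] at hwin
    exact ⟨t, le_rfl, hwin⟩

def CopMoves.shift (CM : CopMoves G k) : CopMoves G k :=
  ⟨fun n => CM.move (n + 1), fun n => CM.valid (n + 1)⟩

open scoped Classical in
noncomputable def RobberMoves.prepend (RM : RobberMoves G k) {r r' : V}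
    (h : r' = r ∨ G.Adj r r') : RobberMoves G k where
  move
    | 0, _, s => if s = r then r' else s
    | n + 1, c, s => RM.move n c s
  valid
    | 0, _, s => by
      dsimp only
      split_ifs with hs
      · exact hs ▸ h
      · exact Or.inl rfl
    | n + 1, c, s => RM.valid n c s

lemma playFrom_prepend (CM : CopMoves G k) (RM : RobberMoves G k) (c : Fin k → V) {r r' : V}
    (h : r' = r ∨ G.Adj r r') (m : ℕ) :
    playFrom CM (RM.prepend h) c r (m + 1) = playFrom CM.shift RM (CM.move 0 c r') r' m := by
  induction m with
  | zero => simp [playFrom, RobberMoves.prepend]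
  | succ m ih =>
    rw [playFrom, ih]
    rfl

lemma winningPosition_of_copsWinFrom {t : ℕ} {c : Fin k → V} {r : V}
    (h : CopsWinFrom G k c r t) : WinningPosition G k t c r := by
  induction t generalizing c r with
  | zero =>
    obtain ⟨CM, hCM⟩ := h
    obtain ⟨n, hn, hcap⟩ := hCM ⟨fun _ _ r => r, fun _ _ _ => Or.inl rfl⟩
    obtain rfl : n = 0 := by omega
    exact hcap
  | succ t ih =>
    obtain ⟨CM, hCM⟩ := h
    by_cases hcap : ∃ i, c i = r
    · exact Or.inl hcap
    refine Or.inr fun r' hr' => ⟨CM.move 0 c r', CM.valid 0 c r', ih ⟨CM.shift, fun RM => ?_⟩⟩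
    obtain ⟨n, hn, hcapn⟩ := hCM (RM.prepend hr')
    cases n with
    | zero => exact absurd hcapn hcap
    | succ m =>
      rw [playFrom_prepend] at hcapn
      exact ⟨m, by omega, hcapn⟩

lemma copsWinIn_iff {t : ℕ} : CopsWinIn G k t ↔ ∃ c, ∀ r, WinningPosition G k t c r :=
  ⟨fun ⟨c, CM, hCM⟩ => ⟨c, fun r => winningPosition_of_copsWinFrom ⟨CM, hCM r⟩⟩,
    fun ⟨c, hc⟩ => ⟨c, winningMoves G k t, fun r RM => capturedIn_winningMoves (hc r) RM⟩⟩

end WinningPosition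

namespace SimpleGraph

/-- `G` is a retract of `G'`: it embeds by `incl`, and `retr` folds `G'` back onto it, mapping each
edge to an edge or collapsing it to a vertex. -/
structure Retract {V V' : Type*} (G : SimpleGraph V) (G' : SimpleGraph V') where
  incl : G →g G'
  retr : V' → V
  retr_incl : ∀ a, retr (incl a) = a
  retr_adj : ∀ a b, G'.Adj a b → retr a = retr b ∨ G.Adj (retr a) (retr b)

namespace Retract

variable {V V' W : Type*} {G : SimpleGraph V} {G' : SimpleGraph V'} {k : ℕ}

lemma winningPosition (ρ : Retract G G') {t : ℕ} {c : Fin k → V'} {r : V}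
    (h : WinningPosition G' k t c (ρ.incl r)) : WinningPosition G k t (ρ.retr ∘ c) r := by
  induction t generalizing c r with
  | zero =>
    obtain ⟨i, hi⟩ := h
    exact ⟨i, by simp [hi, ρ.retr_incl]⟩
  | succ t ih =>
    rcases h with ⟨i, hi⟩ | hmove
    · exact .of_capture ⟨i, by simp [hi, ρ.retr_incl]⟩
    refine Or.inr fun r' hr' => ?_
    obtain ⟨c', hc', hwin⟩ :=
      hmove (ρ.incl r') (hr'.imp (congrArg ρ.incl) ρ.incl.map_adj)
    refine ⟨ρ.retr ∘ c', fun i => ?_, ih hwin⟩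
    rcases hc' i with h | h
    · exact Or.inl (congrArg ρ.retr h)
    · exact (ρ.retr_adj _ _ h).imp Eq.symm id

lemma copsWinIn (ρ : Retract G G') {t : ℕ} (h : CopsWinIn G' k t) : CopsWinIn G k t := by
  obtain ⟨c, hc⟩ := copsWinIn_iff.mp h
  exact copsWinIn_iff.mpr ⟨ρ.retr ∘ c, fun r => ρ.winningPosition (hc _)⟩

lemma captTime_le (ρ : Retract G G') (h : IsCopWin G' k) : captTime G k ≤ captTime G' k :=
  Nat.sInf_le (ρ.copsWinIn (Nat.sInf_mem h))

def boxProdRight (ρ : Retract G G') (H : SimpleGraph W) : Retract (G □ H) (G' □ H) where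
  incl := ⟨Prod.map ρ.incl id, fun {a b} h => by
    rcases boxProd_adj.mp h with ⟨h1, h2⟩ | ⟨h1, h2⟩
    · exact boxProd_adj.mpr (Or.inl ⟨ρ.incl.map_adj h1, h2⟩)
    · exact boxProd_adj.mpr (Or.inr ⟨h1, congrArg ρ.incl h2⟩)⟩
  retr := Prod.map ρ.retr id
  retr_incl a := Prod.ext (ρ.retr_incl a.1) rfl
  retr_adj a b h := by
    rcases boxProd_adj.mp h with ⟨h1, h2⟩ | ⟨h1, h2⟩
    · rcases ρ.retr_adj _ _ h1 with h3 | h3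
      · exact Or.inl (Prod.ext h3 h2)
      · exact Or.inr (boxProd_adj.mpr (Or.inl ⟨h3, h2⟩))
    · exact Or.inr (boxProd_adj.mpr (Or.inr ⟨h1, congrArg ρ.retr h2⟩))

end Retract

section Territory

variable {V : Type*} {T : SimpleGraph V} {a b c : V}

/-- Where a robber at `b` can go without running into a cop standing still at `a`. -/
def territory (T : SimpleGraph V) (a b : V) : Set V := {u | ∃ w : T.Walk b u, a ∉ w.support}

lemma territory_self (a : V) : T.territory a a = ∅ :=
  Set.eq_empty_of_forall_notMem fun _ ⟨w, hw⟩ => hw w.start_mem_support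

lemma mem_territory_self (h : a ≠ b) : b ∈ T.territory a b :=
  ⟨.nil, by simpa using h⟩

lemma ncard_territory_eq_zero [Finite V] : (T.territory a b).ncard = 0 ↔ a = b := by
  refine ⟨fun h => by_contra fun hne => ?_, fun h => by rw [h, territory_self, Set.ncard_empty]⟩
  rw [Set.ncard_eq_zero] at h
  exact (h ▸ mem_territory_self hne : b ∈ (∅ : Set V))

lemma ncard_territory_le [Finite V] : (T.territory a b).ncard ≤ Nat.card V := by
  rw [← Set.ncard_univ]
  exact Set.ncard_le_ncard (Set.subset_univ _)

lemma territory_eq_of_eq_or_adj (hmove : c = b ∨ T.Adj b c) (hb : a ≠ b) (hc : a ≠ c) :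
    T.territory a c = T.territory a b := by
  rcases hmove with rfl | hadj
  · rfl
  ext u
  constructor
  · rintro ⟨w, hw⟩
    exact ⟨.cons hadj w, by simp [hb, hw]⟩
  · rintro ⟨w, hw⟩
    exact ⟨.cons hadj.symm w, by simp [hc, hw]⟩

/-- The cop's new vertex `p.snd` leaves the territory and nothing enters it: a walk from `b` to `a`
avoiding `p.snd` would give a second path from `a` to `b`. -/
lemma IsAcyclic.territory_snd_ssubset (hT : T.IsAcyclic) {p : T.Walk a b} (hp : p.IsPath)
    (hne : a ≠ b) : T.territory p.snd b ⊂ T.territory a b := by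
  classical
  have hnil : ¬p.Nil := Walk.not_nil_of_ne hne
  have ha_tail : a ∉ p.tail.support := by
    have := hp.support_nodup
    rw [← Walk.cons_tail_support, List.nodup_cons] at this
    rw [Walk.support_tail_of_not_nil _ hnil]
    exact this.1
  refine Set.ssubset_iff_of_subset ?_ |>.mpr ⟨p.snd, ⟨p.tail.reverse, by
    rwa [Walk.support_reverse, List.mem_reverse]⟩,
    fun ⟨w, hw⟩ => hw w.end_mem_support⟩
  rintro u ⟨w, hw⟩
  refine ⟨w, fun ha => ?_⟩
  let q := (w.takeUntil a ha).reverse.toPath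
  have hq : p.snd ∉ q.val.support := fun h => hw <| Walk.support_takeUntil_subset_support _ ha <| by
    simpa using Walk.support_toPath_subset_support _ h
  rw [hT.subsingleton_path a b |>.elim q ⟨p, hp⟩] at hq
  exact hq (p.getVert_mem_support 1)

open scoped Classical in
/-- The vertex after `a` on a path from `a` to `b` (`a` itself if there is none). -/
noncomputable def stepToward (T : SimpleGraph V) (a b : V) : V :=
  if h : ∃ p : T.Walk a b, p.IsPath then h.choose.snd else a

lemma Reachable.exists_isPath_stepToward_eq (h : T.Reachable a b) :
    ∃ p : T.Walk a b, p.IsPath ∧ T.stepToward a b = p.snd := by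
  have hex := h.exists_isPath
  classical
  exact ⟨hex.choose, hex.choose_spec, by simp only [stepToward, dif_pos hex]⟩

lemma stepToward_self (a : V) : T.stepToward a a = a := by
  obtain ⟨p, hp, h⟩ := (Reachable.refl a : T.Reachable a a).exists_isPath_stepToward_eq
  cases Walk.isPath_iff_nil.mp hp
  exact h

lemma Reachable.adj_stepToward (h : T.Reachable a b) (hne : a ≠ b) :
    T.Adj a (T.stepToward a b) := by
  obtain ⟨p, -, hp⟩ := h.exists_isPath_stepToward_eq
  exact hp ▸ p.adj_snd (Walk.not_nil_of_ne hne)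

lemma IsAcyclic.stepToward_eq_of_adj (hT : T.IsAcyclic) (h : T.Adj a b) :
    T.stepToward a b = b := by
  obtain ⟨p, hp, hstep⟩ := h.reachable.exists_isPath_stepToward_eq
  exact hstep ▸ (hT.eq_snd_of_adj_start hp h p.end_mem_support).symm

lemma IsTree.ncard_territory_stepToward_lt [Finite V] (hT : T.IsTree) (hne : a ≠ b) :
    (T.territory (T.stepToward a b) b).ncard < (T.territory a b).ncard := by
  obtain ⟨p, hp, hstep⟩ := (hT.connected a b).exists_isPath_stepToward_eq
  exact hstep ▸ Set.ncard_lt_ncard (hT.isAcyclic.territory_snd_ssubset hp hne)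

end Territory

section BoxProd

variable {α β : Type*} {A : SimpleGraph α} {B : SimpleGraph β}

open scoped Classical in
noncomputable def chaseStep (A : SimpleGraph α) (B : SimpleGraph β) (c r : α × β) : α × β :=
  if c.1 = r.1 then (c.1, B.stepToward c.2 r.2) else (A.stepToward c.1 r.1, c.2)

/-- Lexicographic in the two territory sizes; the weight `Nat.card β + 1` exceeds every
`B`-territory. -/
noncomputable def chasePotential (A : SimpleGraph α) (B : SimpleGraph β) (c r : α × β) : ℕ :=
  (Nat.card β + 1) * (A.territory c.1 r.1).ncard + (B.territory c.2 r.2).ncard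

lemma chaseStep_eq_or_adj (hA : A.Connected) (hB : B.Connected) (c r : α × β) :
    A.chaseStep B c r = c ∨ (A □ B).Adj c (A.chaseStep B c r) := by
  unfold chaseStep
  split_ifs with h1
  · by_cases h2 : c.2 = r.2
    · exact Or.inl (Prod.ext rfl (h2 ▸ stepToward_self _))
    · exact Or.inr (boxProd_adj.mpr (Or.inr ⟨(hB.preconnected _ _).adj_stepToward h2, rfl⟩))
  · exact Or.inr (boxProd_adj.mpr (Or.inl ⟨(hA.preconnected _ _).adj_stepToward h1, rfl⟩))

lemma boxProd_adj_swap {x y : α × β} : (B □ A).Adj x.swap y.swap ↔ (A □ B).Adj x y :=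
  Iso.map_adj_iff (boxProdComm (G := A) (H := B))

variable [Finite α] [Finite β]

lemma chasePotential_eq_zero {c r : α × β} : A.chasePotential B c r = 0 ↔ c = r := by
  simp [chasePotential, ncard_territory_eq_zero, Prod.ext_iff]

lemma chasePotential_le (c r : α × β) :
    A.chasePotential B c r ≤ (Nat.card β + 1) * Nat.card α + Nat.card β :=
  add_le_add (Nat.mul_le_mul_left _ ncard_territory_le) ncard_territory_le

lemma chasePotential_chaseStep_lt (hA : A.IsTree) (hB : B.IsTree) {c r r' : α × β}
    (hc : c ≠ r) (hr : r' = r ∨ (A □ B).Adj r r') :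
    A.chasePotential B (A.chaseStep B c r') r' < A.chasePotential B c r ∨
      (r'.1 ≠ r.1 ∧ A.chasePotential B (A.chaseStep B c r') r' ≤ A.chasePotential B c r) := by
  obtain ⟨a, b⟩ := c
  obtain ⟨p, q⟩ := r
  obtain ⟨p', q'⟩ := r'
  have hmove : (p' = p ∧ (q' = q ∨ B.Adj q q')) ∨ (A.Adj p p' ∧ q' = q) := by
    rcases hr with h | h
    · simp_all
    · rcases boxProd_adj.mp h with ⟨h1, h2⟩ | ⟨h1, h2⟩
      · exact Or.inr ⟨h1, h2.symm⟩
      · exact Or.inl ⟨h2.symm, Or.inr h1⟩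
  have hpos : 0 < A.chasePotential B (a, b) (p, q) :=
    Nat.pos_of_ne_zero (chasePotential_eq_zero.not.mpr hc)
  simp only [chasePotential, chaseStep] at hpos ⊢
  by_cases ha : a = p'
  · subst ha
    simp only [if_true, territory_self, Set.ncard_empty, mul_zero, zero_add]
    left
    by_cases hb : b = q'
    · simpa [hb, stepToward_self, territory_self] using hpos
    have hterr : B.territory b q' = B.territory b q := by
      rcases hmove with ⟨rfl, hq⟩ | ⟨-, rfl⟩
      · exact territory_eq_of_eq_or_adj hq (fun h => hc (Prod.ext rfl h)) hb
      · rfl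
    have := hB.ncard_territory_stepToward_lt hb
    rw [hterr] at this
    omega
  · simp only [if_neg ha]
    by_cases hap : a = p
    · subst hap
      obtain ⟨hadj, rfl⟩ := hmove.resolve_left fun h => ha h.1.symm
      right
      simp [hA.isAcyclic.stepToward_eq_of_adj hadj, territory_self, Ne.symm ha]
    left
    have hterr : A.territory a p' = A.territory a p :=
      territory_eq_of_eq_or_adj (hmove.imp (·.1) (·.1)) hap ha
    have hlt := hA.ncard_territory_stepToward_lt ha
    rw [hterr] at hlt
    have hle : (B.territory b q').ncard ≤ Nat.card β := ncard_territory_le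
    nlinarith

/-- Two cops, one chasing along each factor first: every round one of the two potentials drops,
since a robber's move changes only one coordinate. -/
lemma winningPosition_boxProd (hA : A.IsTree) (hB : B.IsTree) {t : ℕ} {c : Fin 2 → α × β}
    {r : α × β} (h : A.chasePotential B (c 0) r + B.chasePotential A (c 1).swap r.swap ≤ t) :
    WinningPosition (A □ B) 2 t c r := by
  induction t generalizing c r with
  | zero => exact .of_capture ⟨0, (chasePotential_eq_zero (A := A) (B := B)).mp (by omega)⟩
  | succ t ih =>
    by_cases hcap : ∃ i, c i = r
    · exact .of_capture hcap
    push Not at hcap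
    refine Or.inr fun r' hr' =>
      ⟨![A.chaseStep B (c 0) r', (B.chaseStep A (c 1).swap r'.swap).swap], fun i => ?_, ih ?_⟩
    · fin_cases i
      · exact chaseStep_eq_or_adj hA.connected hB.connected _ _
      · rcases chaseStep_eq_or_adj hB.connected hA.connected (c 1).swap r'.swap with h | h
        · exact Or.inl (by simp [h])
        · exact Or.inr (boxProd_adj_swap.mp (by simpa using h))
    · have h1 := chasePotential_chaseStep_lt hA hB (hcap 0) hr'
      have h2 := chasePotential_chaseStep_lt hB hA (Prod.swap_injective.ne (hcap 1))
        (hr'.imp (congrArg Prod.swap) boxProd_adj_swap.mpr)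
      have hone : r'.1 = r.1 ∨ r'.2 = r.2 := by
        rcases hr' with rfl | hadj
        · exact Or.inl rfl
        · rcases boxProd_adj.mp hadj with ⟨-, h⟩ | ⟨-, h⟩
          · exact Or.inr h.symm
          · exact Or.inl h.symm
      simp only [Prod.fst_swap] at h2
      simp only [Fin.isValue, Matrix.cons_val_zero, Matrix.cons_val_one, Prod.swap_swap]
      rcases hone with hsame | hsame
      · have h1 := h1.resolve_right fun h => h.1 hsame
        have h2 := h2.elim le_of_lt And.right
        omega
      · have h1 := h1.elim le_of_lt And.right
        have h2 := h2.resolve_right fun h => h.1 hsame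
        omega

theorem isCopWin_boxProd (hA : A.IsTree) (hB : B.IsTree) : IsCopWin (A □ B) 2 := by
  obtain ⟨a⟩ := hA.connected.nonempty
  obtain ⟨b⟩ := hB.connected.nonempty
  exact ⟨_, copsWinIn_iff.mpr ⟨fun _ => (a, b), fun r =>
    winningPosition_boxProd hA hB (add_le_add (chasePotential_le _ _) (chasePotential_le _ _))⟩⟩

end BoxProd

end SimpleGraph

section AddLeaf

variable {V : Type*} {T : SimpleGraph V} {x : V}

def addLeafRetract (T : SimpleGraph V) (x : V) : T.Retract (addLeaf T x) where
  incl := ⟨some, id⟩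
  retr o := o.getD x
  retr_incl _ := rfl
  retr_adj
    | some _, some _, h => Or.inr h
    | some _, none, h => Or.inl h
    | none, some _, h => Or.inl (Eq.symm h)

lemma edgeSet_addLeaf (T : SimpleGraph V) (x : V) :
    (addLeaf T x).edgeSet = Sym2.map some '' T.edgeSet ∪ {s(none, some x)} := by
  ext e
  induction e using Sym2.ind with
  | h a b =>
    rcases a with _ | a <;> rcases b with _ | b <;>
      simp [addLeaf, eq_comm, Sym2.exists, and_or_left, exists_or, adj_comm]

lemma addLeaf_connected (hT : T.Connected) : (addLeaf T x).Connected := by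
  have hx : ∀ o, (addLeaf T x).Reachable (some x) o
    | some a => (hT.preconnected x a).map (addLeafRetract T x).incl
    | none => Adj.reachable rfl
  have := hT.nonempty
  exact ⟨fun a b => (hx a).symm.trans (hx b)⟩

lemma addLeaf_isTree [Finite V] (hT : T.IsTree) : (addLeaf T x).IsTree := by
  rw [isTree_iff_connected_and_card] at hT ⊢
  refine ⟨addLeaf_connected hT.1, ?_⟩
  have hdisj : Disjoint (Sym2.map some '' T.edgeSet) {s(none, some x)} := by
    simp [Sym2.forall]
  rw [Nat.card_coe_set_eq, edgeSet_addLeaf, Set.ncard_union_eq hdisj,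
    Set.ncard_image_of_injective _ (Sym2.map.injective (Option.some_injective V)),
    Set.ncard_singleton, Finite.card_option, ← hT.2, Nat.card_coe_set_eq]

end AddLeaf

theorem captTime_le_addLeaf_general {V1 : Type u} {V2 : Type v}
    [Fintype V1] [Fintype V2] (T1 : SimpleGraph V1) (T2 : SimpleGraph V2)
    (hT1 : T1.IsTree) (hT2 : T2.IsTree) (x : V1) :
    captTime (T1 □ T2) 2 ≤ captTime (addLeaf T1 x □ T2) 2 :=
  ((addLeafRetract T1 x).boxProdRight T2).captTime_le
    (isCopWin_boxProd (addLeaf_isTree hT1) hT2)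

/-- Adding a leaf to one factor does not decrease the
2-capture time of the Cartesian product of two trees. -/
theorem captTime_le_addLeaf {V1 : Type u} {V2 : Type v}
    [Fintype V1] [Fintype V2] (T1 : SimpleGraph V1) (T2 : SimpleGraph V2)
    (hT1 : T1.IsTree) (hT2 : T2.IsTree)
    (hE1 : ∃ x y, T1.Adj x y) (hE2 : ∃ x y, T2.Adj x y) (x : V1) :
    captTime (T1 □ T2) 2 ≤ captTime (addLeaf T1 x □ T2) 2 :=
  captTime_le_addLeaf_general T1 T2 hT1 hT2 x
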